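/- arXiv:1402.1561 — 7 statements merged into one kernel-verified Lean document; each statement's English description precedes it below -/
import Mathlib

section
/- The map (f,g) ↦ f+g defines a bijection between direct acute bases of ℤ², i.e. pairs (f,g) ∈ ℤ²×ℤ² with det(f,g) = 1 and ⟨f,g⟩ ≥ 0, and irreducible vectors e ∈ ℤ² with ‖e‖ > 1. -/
/-- Vectors of `ℤ²`. -/
abbrev V : Type := ℤ × ℤ

/-- Determinant of two vectors of `ℤ²`. -/
def det2 (f g : V) : ℤ := f.1 * g.2 - f.2 * g.1

/-- Standard inner product on `ℤ²`. -/
def dot (f g : V) : ℤ := f.1 * g.1 + f.2 * g.2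

/-- Squared euclidean norm on `ℤ²`. -/
def nsq (e : V) : ℤ := e.1 ^ 2 + e.2 ^ 2

/-- A vector of `ℤ²` is irreducible iff its coordinates are coprime. -/
def Irred (e : V) : Prop := Int.gcd e.1 e.2 = 1

/-- `(f, g)` are the parents of `e` : they form a direct acute basis summing to `e`. -/
def IsParents (f g e : V) : Prop := e = f + g ∧ det2 f g = 1 ∧ 0 ≤ dot f g

/-- `f` is a parent of `e`. -/
def IsParent (f e : V) : Prop := ∃ g : V, IsParents f g e ∨ IsParents g f e

/-- Embedding of `ℤ²` into `ℝ²`. -/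
def toR (e : V) : ℝ × ℝ := ((e.1 : ℝ), (e.2 : ℝ))

/-!
Writing `s = ⟨f, e⟩`, Lagrange's identity `⟨f, e⟩² + det(f, e)² = ‖f‖²‖e‖²` gives, for
`N = ‖e‖²` and `det(f, e) = 1`, the relation `N ⟨f, e - f⟩ = s (N - s) - 1`. Hence `(f, e - f)` is
a direct acute basis iff `det(f, e) = 1` and `0 < s < N`. For coprime `e` the solutions of
`det(f, e) = 1` form a coset `f₀ + ℤ e`, along which `s` runs through a residue class modulo `N`;
that class is not `0` because `s² + 1 ≡ 0 (mod N)` and `N > 1`, so exactly one parent `f` has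
`0 < s < N`.
-/

lemma det2_sub_self (f e : V) : det2 f (e - f) = det2 f e := by
  simp only [det2, Prod.fst_sub, Prod.snd_sub]; ring

lemma det2_sub_left (f f' e : V) : det2 (f' - f) e = det2 f' e - det2 f e := by
  simp only [det2, Prod.fst_sub, Prod.snd_sub]; ring

lemma det2_smul_left_self (k : ℤ) (e : V) : det2 (k • e) e = 0 := by
  simp only [det2, Prod.smul_fst, Prod.smul_snd, smul_eq_mul]; ring

lemma dot_smul_left_self (k : ℤ) (e : V) : dot (k • e) e = k * nsq e := by
  simp only [dot, nsq, Prod.smul_fst, Prod.smul_snd, smul_eq_mul]; ring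

lemma dot_sub_left (f f' e : V) : dot (f' - f) e = dot f' e - dot f e := by
  simp only [dot, Prod.fst_sub, Prod.snd_sub]; ring

lemma nsq_nonneg (e : V) : 0 ≤ nsq e := by
  unfold nsq; positivity

lemma dot_sq_add_det2_sq (f e : V) : dot f e ^ 2 + det2 f e ^ 2 = nsq f * nsq e := by
  simp only [dot, det2, nsq]; ring

lemma nsq_mul_dot_sub_self (f e : V) :
    nsq e * dot f (e - f) = dot f e * (nsq e - dot f e) - det2 f e ^ 2 := by
  simp only [dot, det2, nsq, Prod.fst_sub, Prod.snd_sub]; ring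

lemma irred_of_det2_eq_one {f e : V} (h : det2 f e = 1) : Irred e := by
  rw [Irred, ← Int.isCoprime_iff_gcd_eq_one]
  exact ⟨-f.2, f.1, by unfold det2 at h; linear_combination h⟩

lemma one_lt_nsq_add {f g : V} (hdet : det2 f g = 1) (hdot : 0 ≤ dot f g) :
    1 < nsq (f + g) := by
  have hlag := dot_sq_add_det2_sq f g
  rw [hdet] at hlag
  have hf : 0 ≤ nsq f := nsq_nonneg f
  have hg : 0 ≤ nsq g := nsq_nonneg g
  have hsum : nsq (f + g) = nsq f + nsq g + 2 * dot f g := by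
    simp only [nsq, dot, Prod.fst_add, Prod.snd_add]; ring
  nlinarith [sq_nonneg (dot f g)]

lemma exists_det2_eq_one {e : V} (he : Irred e) : ∃ f : V, det2 f e = 1 := by
  obtain ⟨a, b, hab⟩ := Int.isCoprime_iff_gcd_eq_one.mpr he
  exact ⟨(b, -a), by simp only [det2]; linear_combination hab⟩

lemma exists_eq_smul_of_det2_eq_zero {x e : V} (he : Irred e) (h : det2 x e = 0) :
    ∃ k : ℤ, x = k • e := by
  obtain ⟨a, b, hab⟩ := Int.isCoprime_iff_gcd_eq_one.mpr he
  unfold det2 at h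
  refine ⟨a * x.1 + b * x.2, Prod.ext ?_ ?_⟩
  · simp only [Prod.smul_fst, smul_eq_mul]; linear_combination -x.1 * hab + b * h
  · simp only [Prod.smul_snd, smul_eq_mul]; linear_combination -x.2 * hab - a * h

lemma det2_sub_self_eq_one_and_dot_nonneg_iff {f e : V} (hN : 0 < nsq e) :
    det2 f (e - f) = 1 ∧ 0 ≤ dot f (e - f) ↔ det2 f e = 1 ∧ dot f e ∈ Set.Ioo 0 (nsq e) := by
  rw [det2_sub_self, Set.mem_Ioo]
  refine and_congr_right fun hdet => ?_
  have hkey := nsq_mul_dot_sub_self f e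
  rw [hdet] at hkey
  constructor
  · intro hdot
    have : 1 ≤ dot f e * (nsq e - dot f e) := by nlinarith
    constructor <;> nlinarith
  · rintro ⟨hs0, hsN⟩
    nlinarith

lemma eq_of_det2_eq_one_of_dot_mem_Ioo {f f' e : V} (he : Irred e)
    (hf : det2 f e = 1 ∧ dot f e ∈ Set.Ioo 0 (nsq e))
    (hf' : det2 f' e = 1 ∧ dot f' e ∈ Set.Ioo 0 (nsq e)) : f' = f := by
  obtain ⟨hdet, hs0, hsN⟩ := hf
  obtain ⟨hdet', hs0', hsN'⟩ := hf'
  obtain ⟨k, hk⟩ := exists_eq_smul_of_det2_eq_zero he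
    (by rw [det2_sub_left, hdet, hdet', sub_self] : det2 (f' - f) e = 0)
  have hs : dot f' e - dot f e = k * nsq e := by
    rw [← dot_sub_left, hk, dot_smul_left_self]
  have hk0 : k = 0 := by nlinarith
  rwa [hk0, zero_smul, sub_eq_zero] at hk

lemma exists_det2_eq_one_dot_mem_Ioo {e : V} (he : Irred e) (hN : 1 < nsq e) :
    ∃ f : V, det2 f e = 1 ∧ dot f e ∈ Set.Ioo 0 (nsq e) := by
  obtain ⟨f₀, hf₀⟩ := exists_det2_eq_one he
  set f := f₀ - (dot f₀ e / nsq e) • e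
  have hdet : det2 f e = 1 := by
    rw [det2_sub_left, det2_smul_left_self, hf₀, sub_zero]
  have hdot : dot f e = dot f₀ e % nsq e := by
    rw [dot_sub_left, dot_smul_left_self, Int.emod_def, mul_comm]
  refine ⟨f, hdet, ?_, hdot ▸ Int.emod_lt_of_pos _ (by omega)⟩
  refine (hdot ▸ Int.emod_nonneg _ (by omega) : 0 ≤ dot f e).lt_of_ne fun hs => ?_
  have hlag := dot_sq_add_det2_sq f e
  rw [hdet, ← hs] at hlag
  have : nsq e ≤ 1 := Int.le_of_dvd one_pos ⟨nsq f, by linarith⟩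
  omega

/-- The map `(f,g) ↦ f+g` is a bijection between direct acute bases of `ℤ²`
and irreducible vectors `e` with `‖e‖ > 1`. -/
theorem parent_bijection :
    (∀ f g : V, det2 f g = 1 → 0 ≤ dot f g → Irred (f + g) ∧ 1 < nsq (f + g)) ∧
    (∀ e : V, Irred e → 1 < nsq e →
      ∃! p : V × V, det2 p.1 p.2 = 1 ∧ 0 ≤ dot p.1 p.2 ∧ p.1 + p.2 = e) := by
  refine ⟨fun f g hdet hdot => ⟨irred_of_det2_eq_one (f := f) ?_, one_lt_nsq_add hdet hdot⟩,
    fun e he hN => ?_⟩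
  · rw [← det2_sub_self, add_sub_cancel_left, hdet]
  have hparents (f : V) :
      det2 f (e - f) = 1 ∧ 0 ≤ dot f (e - f) ↔ det2 f e = 1 ∧ dot f e ∈ Set.Ioo 0 (nsq e) :=
    det2_sub_self_eq_one_and_dot_nonneg_iff (by omega)
  obtain ⟨f, hf⟩ := exists_det2_eq_one_dot_mem_Ioo he hN
  obtain ⟨hdet, hdot⟩ := (hparents f).mpr hf
  refine ⟨(f, e - f), ⟨hdet, hdot, add_sub_cancel f e⟩, ?_⟩
  rintro ⟨f', g'⟩ ⟨hdet', hdot', hsum⟩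
  obtain rfl : g' = e - f' := eq_sub_of_add_eq' hsum
  obtain rfl : f' = f := eq_of_det2_eq_one_of_dot_mem_Ioo he hf ((hparents f').mp ⟨hdet', hdot'⟩)
  rfl
end

section
/- Let (f,g) be a basis of ℤ² with det(f,g) = 1 which is not acute, i.e. ⟨f,g⟩ < 0. If ‖f‖ ≥ ‖g‖ then f+g is a parent of f, and otherwise f+g is a parent of g. -/
/-! By Lagrange's identity `det(f,g)² + ⟨f,g⟩² = ‖f‖²‖g‖²`, a unimodular pair with
`‖g‖ ≤ ‖f‖` has `⟨f,g⟩² ≥ ‖g‖⁴ - 1`; for a negative integer `⟨f,g⟩` this forces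
`-⟨f,g⟩ ≥ ‖g‖²`, which is exactly the acuteness of the direct basis `(-g, f+g)` of sum `f`.
The case `‖f‖ < ‖g‖` is symmetric, with the basis `(f+g, -f)` of sum `g`. -/

lemma le_of_sq_le_sq_add_one {n d : ℤ} (hd : 0 < d) (h : n ^ 2 ≤ d ^ 2 + 1) : n ≤ d := by
  by_contra! hlt
  nlinarith

lemma dot_comm (f g : V) : dot f g = dot g f := by
  unfold dot; ring

lemma det2_swap (f g : V) : det2 g f = -det2 f g := by
  unfold det2; ring

lemma det2_sq_add_dot_sq (f g : V) : det2 f g ^ 2 + dot f g ^ 2 = nsq f * nsq g := by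
  unfold det2 dot nsq; ring

lemma nsq_le_neg_dot {f g : V} (hd : det2 f g ^ 2 ≤ 1) (hna : dot f g < 0)
    (hle : nsq g ≤ nsq f) : nsq g ≤ -dot f g := by
  refine le_of_sq_le_sq_add_one (neg_pos.mpr hna) ?_
  have hg := nsq_nonneg g
  nlinarith [det2_sq_add_dot_sq f g, mul_le_mul_of_nonneg_right hle hg]

lemma isParents_neg_add {f g : V} (hd : det2 f g = 1) (h : nsq g ≤ -dot f g) :
    IsParents (-g) (f + g) f := by
  refine ⟨by abel, ?_, ?_⟩
  · simp only [det2, Prod.fst_add, Prod.snd_add, Prod.fst_neg, Prod.snd_neg] at hd ⊢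
    linarith
  · simp only [dot, nsq, Prod.fst_add, Prod.snd_add, Prod.fst_neg, Prod.snd_neg] at h ⊢
    linarith

lemma isParents_add_neg {f g : V} (hd : det2 f g = 1) (h : nsq f ≤ -dot f g) :
    IsParents (f + g) (-f) g := by
  refine ⟨by abel, ?_, ?_⟩
  · simp only [det2, Prod.fst_add, Prod.snd_add, Prod.fst_neg, Prod.snd_neg] at hd ⊢
    linarith
  · simp only [dot, nsq, Prod.fst_add, Prod.snd_add, Prod.fst_neg, Prod.snd_neg] at h ⊢
    linarith

/-- If `(f,g)` is a direct non-acute basis, then `f+g` is a parent of the larger of `f, g`. -/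
theorem sum_parent_of_nonacute (f g : V) (hd : det2 f g = 1) (hna : dot f g < 0) :
    (nsq g ≤ nsq f → IsParent (f + g) f) ∧ (nsq f < nsq g → IsParent (f + g) g) := by
  have hd_sq : det2 f g ^ 2 ≤ 1 := by rw [hd]; norm_num
  have hd_sq' : det2 g f ^ 2 ≤ 1 := by rwa [det2_swap, neg_sq]
  refine ⟨fun hle => ⟨-g, Or.inr (isParents_neg_add hd (nsq_le_neg_dot hd_sq hna hle))⟩,
    fun hlt => ⟨-f, Or.inl (isParents_add_neg hd ?_)⟩⟩
  rw [dot_comm] at hna ⊢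
  exact nsq_le_neg_dot hd_sq' hna hlt.le
end

section
/- Let e ∈ ℤ² be irreducible with ‖e‖ > 1 and parents f, g. Then every irreducible e' ∈ ℤ² having e as a parent is of the form e' = f + k·e or e' = k·e + g for some integer k ≥ 1. -/
/-! A child `e'` of `e` is `e + h` or `h + e`, where `(e, h)` resp. `(h, e)` is a direct basis.
Comparing determinants, `h - g` resp. `h - f` is parallel to `e`, hence equals `t • e` because `e`
is primitive. Since `⟨f, e⟩` and `⟨g, e⟩` are positive and add up to `‖e‖²`, a negative `t` would
make `⟨h, e⟩` negative, against the acuteness of the new pair of parents. -/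

lemma det2_comm (f g : V) : det2 f g = -det2 g f := by
  simp only [det2]; ring

lemma nsq_pos {f : V} (hf : f ≠ 0) : 0 < nsq f := by
  obtain ⟨a, b⟩ := f
  unfold nsq
  by_cases ha : a = 0
  · have hb : b ≠ 0 := by rintro rfl; exact hf (by rw [ha]; rfl)
    positivity
  · positivity

lemma exists_eq_smul_of_det2_eq_zero_s3 {e v : V} (he : IsCoprime e.1 e.2) (h : det2 e v = 0) :
    ∃ t : ℤ, v = t • e := by
  obtain ⟨a, b, hab⟩ := he
  simp only [det2] at h
  refine ⟨a * v.1 + b * v.2, Prod.ext ?_ ?_⟩ <;>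
    simp only [Prod.smul_fst, Prod.smul_snd, smul_eq_mul]
  · linear_combination (-v.1) * hab - b * h
  · linear_combination (-v.2) * hab + a * h

lemma exists_nonneg_eq_add_smul {e u w : V} (he : IsCoprime e.1 e.2)
    (hdet : det2 e w = det2 e u) (hu : dot u e < nsq e) (hw : 0 ≤ dot w e) :
    ∃ t : ℤ, 0 ≤ t ∧ w = u + t • e := by
  obtain ⟨t, ht⟩ := exists_eq_smul_of_det2_eq_zero_s3 he (v := w - u) (by
    simp only [det2, Prod.fst_sub, Prod.snd_sub] at hdet ⊢; linarith)
  rw [sub_eq_iff_eq_add'] at ht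
  refine ⟨t, ?_, ht⟩
  have hdot : dot w e = dot u e + t * nsq e := by
    rw [ht]
    simp only [dot, nsq, Prod.fst_add, Prod.snd_add, Prod.smul_fst, Prod.smul_snd, smul_eq_mul]
    ring
  have hnsq : 0 ≤ nsq e := by unfold nsq; positivity
  by_contra! ht0
  nlinarith [mul_le_mul_of_nonneg_right (show t ≤ -1 by omega) hnsq]

namespace IsParents

variable {f g e : V}

lemma left_ne_zero (hp : IsParents f g e) : f ≠ 0 := by
  obtain ⟨-, hdet, -⟩ := hp
  rintro rfl; simp [det2] at hdet

lemma right_ne_zero (hp : IsParents f g e) : g ≠ 0 := by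
  obtain ⟨-, hdet, -⟩ := hp
  rintro rfl; simp [det2] at hdet

lemma det2_right (hp : IsParents f g e) : det2 e g = 1 := by
  obtain ⟨rfl, hdet, -⟩ := hp
  simp only [det2, Prod.fst_add, Prod.snd_add] at hdet ⊢; linarith

lemma det2_left (hp : IsParents f g e) : det2 e f = -1 := by
  obtain ⟨rfl, hdet, -⟩ := hp
  simp only [det2, Prod.fst_add, Prod.snd_add] at hdet ⊢; linarith

lemma nsq_eq (hp : IsParents f g e) : nsq e = dot f e + dot g e := by
  obtain ⟨rfl, -, -⟩ := hp
  simp only [nsq, dot, Prod.fst_add, Prod.snd_add]; ring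

lemma dot_left_pos (hp : IsParents f g e) : 0 < dot f e := by
  have hf := nsq_pos hp.left_ne_zero
  obtain ⟨rfl, -, hdot⟩ := hp
  simp only [nsq, dot, Prod.fst_add, Prod.snd_add] at hf hdot ⊢; linarith

lemma dot_right_pos (hp : IsParents f g e) : 0 < dot g e := by
  have hg := nsq_pos hp.right_ne_zero
  obtain ⟨rfl, -, hdot⟩ := hp
  simp only [nsq, dot, Prod.fst_add, Prod.snd_add] at hg hdot ⊢; linarith

end IsParents

theorem children_form_general (e f g : V) (he : Irred e)
    (hp : IsParents f g e) (e' : V) (hc : IsParent e e') :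
    ∃ k : ℤ, 1 ≤ k ∧ (e' = f + k • e ∨ e' = k • e + g) := by
  have hcop : IsCoprime e.1 e.2 := Int.isCoprime_iff_gcd_eq_one.mpr he
  obtain ⟨h, ⟨rfl, hdet, hdot⟩ | ⟨rfl, hdet, hdot⟩⟩ := hc
  · obtain ⟨t, ht, rfl⟩ := exists_nonneg_eq_add_smul hcop (u := g) (w := h)
      (by rw [hdet, hp.det2_right]) (by linarith [hp.nsq_eq, hp.dot_left_pos])
      (by rwa [dot_comm])
    exact ⟨t + 1, by omega, Or.inr (by rw [add_smul, one_smul]; abel)⟩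
  · obtain ⟨t, ht, rfl⟩ := exists_nonneg_eq_add_smul hcop (u := f) (w := h)
      (by rw [det2_comm, hdet, hp.det2_left]) (by linarith [hp.nsq_eq, hp.dot_right_pos]) hdot
    exact ⟨t + 1, by omega, Or.inl (by rw [add_smul, one_smul]; abel)⟩

/-- The children of an irreducible `e` with parents `f, g` have the form
`f + k • e` or `k • e + g` with `k ≥ 1`. -/
theorem children_form (e f g : V) (he : Irred e) (hn : 1 < nsq e)
    (hp : IsParents f g e) (e' : V) (he' : Irred e') (hc : IsParent e e') :
    ∃ k : ℤ, 1 ≤ k ∧ (e' = f + k • e ∨ e' = k • e + g) :=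
  children_form_general e f g he hp e' hc
end

section
/- Let e ∈ ℤ² be irreducible with ‖e‖ > 1, and let (f,g) be a direct acute basis of ℤ² with e in the interior of the cone generated by f and g (i.e. e = αf + βg with α, β positive integers). Then both parents of e lie in the triangle with vertices e, f, g. -/
/-!
Write the parents in the basis `(f, g)` as `f' = p f + q g` and `g' = r f + s g`, so that
`p + r = a`, `q + s = b` and `p s - q r = 1`. Expanding `⟨f', g'⟩ ≥ 0` in this basis, with
`⟨f, g⟩ ≥ 0`, rules out `q < 0` (it would force `p ≤ 0 < r, s`, making every term of the
expansion nonpositive and `q s ‖g‖²` negative), and symmetrically `r < 0`; then `p, s ≥ 1`.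
With these signs, `(a + b - 1) f' = (p + q - 1) e + (r + 1) f + (s - 1) g` exhibits `f'` as a
convex combination of `e, f, g`, and symmetrically for `g'`.
-/

section Coordinates

variable {f g : V}

lemma det2_smul_add_smul (f g : V) (p q r s : ℤ) :
    det2 (p • f + q • g) (r • f + s • g) = (p * s - q * r) * det2 f g := by
  simp only [det2, Prod.fst_add, Prod.snd_add, Prod.smul_fst, Prod.smul_snd, smul_eq_mul]
  ring

lemma dot_smul_add_smul (f g : V) (p q r s : ℤ) :
    dot (p • f + q • g) (r • f + s • g) =
      p * r * nsq f + q * s * nsq g + (p * s + q * r) * dot f g := by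
  simp only [dot, nsq, Prod.fst_add, Prod.snd_add, Prod.smul_fst, Prod.smul_snd, smul_eq_mul]
  ring

lemma exists_eq_smul_add_smul (hd : det2 f g = 1) (x : V) : ∃ p q : ℤ, x = p • f + q • g := by
  unfold det2 at hd
  refine ⟨det2 x g, det2 f x, Prod.ext ?_ ?_⟩ <;>
  simp only [det2, Prod.fst_add, Prod.snd_add, Prod.smul_fst, Prod.smul_snd, smul_eq_mul]
  · linear_combination (-x.1) * hd
  · linear_combination (-x.2) * hd

lemma smul_add_smul_inj (hd : det2 f g ≠ 0) {p q p' q' : ℤ}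
    (h : p • f + q • g = p' • f + q' • g) : p = p' ∧ q = q' := by
  have hp := congrArg (det2 · g) h
  have hq := congrArg (det2 f ·) h
  simp only [det2, Prod.fst_add, Prod.snd_add, Prod.smul_fst, Prod.smul_snd, smul_eq_mul] at hp hq hd
  constructor
  · exact mul_right_cancel₀ hd (by linear_combination hp)
  · exact mul_right_cancel₀ hd (by linear_combination hq)

lemma nsq_pos_of_det2_ne_zero (hd : det2 f g ≠ 0) : 0 < nsq f ∧ 0 < nsq g := by
  unfold nsq
  unfold det2 at hd
  constructor <;> by_contra! h <;> apply hd
  · rw [show f.1 = 0 by nlinarith, show f.2 = 0 by nlinarith]; ring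
  · rw [show g.1 = 0 by nlinarith, show g.2 = 0 by nlinarith]; ring

end Coordinates

lemma nonneg_of_acute {p q r s Nf Ng M : ℤ} (ha : 1 ≤ p + r) (hb : 1 ≤ q + s)
    (hdet : p * s - q * r = 1) (hNf : 0 ≤ Nf) (hNg : 0 < Ng) (hM : 0 ≤ M)
    (hdot : 0 ≤ p * r * Nf + q * s * Ng + (p * s + q * r) * M) : 0 ≤ q := by
  by_contra! hq
  have hbp : (q + s) * p ≤ 0 := by nlinarith
  have hp : p ≤ 0 := by nlinarith
  have hr : 0 < r := by linarith
  have hs : 0 < s := by linarith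
  have h1 : p * r * Nf ≤ 0 := mul_nonpos_of_nonpos_of_nonneg (by nlinarith) hNf
  have h2 : q * s * Ng < 0 := mul_neg_of_neg_of_pos (by nlinarith) hNg
  have h3 : (p * s + q * r) * M ≤ 0 := mul_nonpos_of_nonpos_of_nonneg (by nlinarith) hM
  linarith

lemma parent_coords_bounds {p q r s Nf Ng M : ℤ} (ha : 1 ≤ p + r) (hb : 1 ≤ q + s)
    (hdet : p * s - q * r = 1) (hNf : 0 < Nf) (hNg : 0 < Ng) (hM : 0 ≤ M)
    (hdot : 0 ≤ p * r * Nf + q * s * Ng + (p * s + q * r) * M) :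
    1 ≤ p ∧ 0 ≤ q ∧ 0 ≤ r ∧ 1 ≤ s := by
  have hq := nonneg_of_acute ha hb hdet hNf.le hNg hM hdot
  have hr := nonneg_of_acute (by linarith) (by linarith) (by linarith) hNg.le hNf hM
    (by linarith : 0 ≤ s * q * Ng + r * p * Nf + (s * p + r * q) * M)
  refine ⟨?_, hq, hr, ?_⟩ <;> nlinarith

lemma mem_convexHull_triple_of_smul_eq {E : Type*} [AddCommGroup E] [Module ℝ E]
    {x u v w : E} {l m n : ℝ} (hl : 0 ≤ l) (hm : 0 ≤ m) (hn : 0 ≤ n) (hpos : 0 < l + m + n)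
    (h : (l + m + n) • x = l • u + m • v + n • w) : x ∈ convexHull ℝ {u, v, w} := by
  have hmem := Finset.centerMass_mem_convexHull (s := {u, v, w}) Finset.univ
    (w := ![l, m, n]) (z := ![u, v, w])
    (by intro i _; fin_cases i <;> assumption)
    (by simpa [Fin.sum_univ_three] using hpos)
    (by intro i _; fin_cases i <;> simp)
  convert hmem
  simp only [Finset.centerMass, Fin.sum_univ_three, Matrix.cons_val_zero, Matrix.cons_val_one,
    Matrix.cons_val_two, Matrix.head_cons, Matrix.tail_cons, ← h, smul_smul]
  rw [inv_mul_cancel₀ hpos.ne', one_smul]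

lemma toR_add (x y : V) : toR (x + y) = toR x + toR y := by
  simp [toR]

lemma toR_zsmul (n : ℤ) (x : V) : toR (n • x) = (n : ℝ) • toR x := by
  simp [toR]

lemma toR_mem_triangle {e f g x : V} {p q r s : ℤ} (hp : 1 ≤ p) (hq : 0 ≤ q) (hr : 0 ≤ r)
    (hs : 1 ≤ s) (hdet : p * s - q * r = 1) (hx : x = p • f + q • g)
    (he : e = (p + r) • f + (q + s) • g) :
    toR x ∈ convexHull ℝ {toR e, toR f, toR g} := by
  have key : (p + q - 1 + (r + 1) + (s - 1)) • x =
      (p + q - 1) • e + (r + 1) • f + (s - 1) • g := by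
    rw [hx, he]
    linear_combination (norm := module) hdet • (f - g)
  have hcast := congrArg toR key
  simp only [toR_add, toR_zsmul] at hcast
  refine mem_convexHull_triple_of_smul_eq (l := ((p + q - 1 : ℤ) : ℝ)) (m := ((r + 1 : ℤ) : ℝ))
    (n := ((s - 1 : ℤ) : ℝ)) ?_ ?_ ?_ ?_ ?_
  · exact_mod_cast (by omega : 0 ≤ p + q - 1)
  · exact_mod_cast (by omega : 0 ≤ r + 1)
  · exact_mod_cast (by omega : 0 ≤ s - 1)
  · exact_mod_cast (by omega : 0 < p + q - 1 + (r + 1) + (s - 1))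
  · rwa [← Int.cast_add, ← Int.cast_add]

theorem parents_in_triangle_general (e f g : V)
    (hd : det2 f g = 1) (hac : 0 ≤ dot f g)
    (a b : ℤ) (ha : 1 ≤ a) (hb : 1 ≤ b) (hcone : e = a • f + b • g)
    (f' g' : V) (hp : IsParents f' g' e) :
    toR f' ∈ convexHull ℝ ({toR e, toR f, toR g} : Set (ℝ × ℝ)) ∧
      toR g' ∈ convexHull ℝ ({toR e, toR f, toR g} : Set (ℝ × ℝ)) := by
  obtain ⟨hsum, hdet, hdot⟩ := hp
  obtain ⟨p, q, rfl⟩ := exists_eq_smul_add_smul hd f'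
  obtain ⟨r, s, rfl⟩ := exists_eq_smul_add_smul hd g'
  rw [det2_smul_add_smul, hd, mul_one] at hdet
  rw [dot_smul_add_smul] at hdot
  have he : e = (p + r) • f + (q + s) • g := by rw [hsum]; module
  have hd0 : det2 f g ≠ 0 := by simp [hd]
  obtain ⟨rfl, rfl⟩ := smul_add_smul_inj hd0 (hcone.symm.trans he)
  obtain ⟨hNf, hNg⟩ := nsq_pos_of_det2_ne_zero hd0
  obtain ⟨hp, hq, hr, hs⟩ := parent_coords_bounds ha hb hdet hNf hNg hac hdot
  refine ⟨toR_mem_triangle hp hq hr hs hdet rfl he, ?_⟩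
  -- `g' = s g + r f` plays the role of `f'` for the basis `(g, f)`.
  rw [Set.pair_comm (toR f)]
  exact toR_mem_triangle hs hr hq hp (by linarith) (add_comm _ _) (by rw [he]; module)

/-- If an irreducible `e` with `‖e‖ > 1` lies in the interior of the cone generated by
a direct acute basis `(f,g)`, then both parents of `e` lie in the triangle `[e, f, g]`. -/
theorem parents_in_triangle (e f g : V) (he : Irred e) (hn : 1 < nsq e)
    (hd : det2 f g = 1) (hac : 0 ≤ dot f g)
    (a b : ℤ) (ha : 1 ≤ a) (hb : 1 ≤ b) (hcone : e = a • f + b • g)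
    (f' g' : V) (hp : IsParents f' g' e) :
    toR f' ∈ convexHull ℝ ({toR e, toR f, toR g} : Set (ℝ × ℝ)) ∧
      toR g' ∈ convexHull ℝ ({toR e, toR f, toR g} : Set (ℝ × ℝ)) :=
  parents_in_triangle_general e f g hd hac a b ha hb hcone f' g' hp
end

section
/- Let e ∈ ℤ² \ {0}, and let (f,g) be a direct acute basis of ℤ² such that e = αf + βg with α, β positive integers. Then any child e' of e (i.e. a vector having e as a parent) also satisfies e' = α'f + β'g with α', β' positive integers (i.e. e' lies in the open cone generated by f and g). -/
lemma det2_linearCombination (f g : V) (a b α β : ℤ) :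
    det2 (a • f + b • g) (α • f + β • g) = (a * β - b * α) * det2 f g := by
  simp only [det2, Prod.fst_add, Prod.snd_add, Prod.smul_fst, Prod.smul_snd, smul_eq_mul]; ring

lemma dot_linearCombination (f g : V) (a b α β : ℤ) :
    dot (a • f + b • g) (α • f + β • g) =
      a * α * dot f f + b * β * dot g g + (a * β + b * α) * dot f g := by
  simp only [dot, Prod.fst_add, Prod.snd_add, Prod.smul_fst, Prod.smul_snd, smul_eq_mul]; ring

lemma eq_det2_smul_add_det2_smul {f g : V} (hd : det2 f g = 1) (x : V) :
    x = det2 x g • f + det2 f x • g := by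
  obtain ⟨x1, x2⟩ := x
  simp only [det2] at hd ⊢
  ext <;> simp only [Prod.fst_add, Prod.snd_add, Prod.smul_fst, Prod.smul_snd, smul_eq_mul]
  · linear_combination -x1 * hd
  · linear_combination -x2 * hd

lemma dot_self_pos_of_det2_ne_zero {f g : V} (hd : det2 f g ≠ 0) : 0 < dot f f := by
  obtain ⟨f1, f2⟩ := f
  simp only [dot, det2] at hd ⊢
  by_contra! hle
  have hf1 : f1 = 0 := by nlinarith [sq_nonneg f1, sq_nonneg f2]
  have hf2 : f2 = 0 := by nlinarith [sq_nonneg f1, sq_nonneg f2]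
  simp [hf1, hf2] at hd

lemma IsParent.det2_eq_one_or_eq_neg_one {e e' : V} (h : IsParent e e') :
    det2 e e' = 1 ∨ det2 e e' = -1 := by
  obtain ⟨h, ⟨rfl, hd, -⟩ | ⟨rfl, hd, -⟩⟩ := h
  · left; simp only [det2, Prod.fst_add, Prod.snd_add] at hd ⊢; linear_combination hd
  · right; simp only [det2, Prod.fst_add, Prod.snd_add] at hd ⊢; linear_combination -hd

lemma IsParent.dot_self_le_dot {e e' : V} (h : IsParent e e') : dot e e ≤ dot e e' := by
  obtain ⟨h, ⟨rfl, -, hac⟩ | ⟨rfl, -, hac⟩⟩ := h <;>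
    simp only [dot, Prod.fst_add, Prod.snd_add] at hac ⊢ <;> linarith

section GramInequality

variable {Nf Ng D a b α β : ℤ}

/-- `Nf, Ng, D` are the entries of the Gram matrix of `(f, g)`, and the hypothesis `hdot` reads
`‖a f + b g‖² ≤ ⟨a f + b g, α f + β g⟩`. -/
lemma pos_and_pos_of_det_eq_one (hNf : 0 < Nf) (hNg : 0 ≤ Ng) (hD : 0 ≤ D) (ha : 0 < a)
    (hb : 0 < b) (hdet : a * β - b * α = 1)
    (hdot : a * a * Nf + b * b * Ng + 2 * a * b * D ≤
      a * α * Nf + b * β * Ng + (a * β + b * α) * D) :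
    0 < α ∧ 0 < β := by
  rcases lt_or_ge 0 α with hα | hα
  · exact ⟨hα, pos_of_mul_pos_right (by nlinarith : 0 < a * β) ha.le⟩
  exfalso
  have hbα : b * α ≤ 0 := mul_nonpos_of_nonneg_of_nonpos hb.le hα
  rcases le_or_gt β 0 with hβ | hβ
  · have haα : a * α ≤ 0 := mul_nonpos_of_nonneg_of_nonpos ha.le hα
    have hbβ : b * β ≤ 0 := mul_nonpos_of_nonneg_of_nonpos hb.le hβ
    have haβ : a * β ≤ 0 := mul_nonpos_of_nonneg_of_nonpos ha.le hβ
    nlinarith [mul_pos (mul_pos ha ha) hNf, mul_pos hb hb, mul_pos ha hb]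
  · have haβ : a * β = 1 := by nlinarith
    have hα0 : α = 0 := (mul_eq_zero.mp (by linarith : b * α = 0)).resolve_left hb.ne'
    obtain rfl := Int.eq_one_of_mul_eq_one_right ha.le haβ
    obtain rfl := Int.eq_one_of_mul_eq_one_left hβ.le haβ
    subst hα0
    nlinarith [mul_nonneg (mul_nonneg hb.le (by omega : (0 : ℤ) ≤ b - 1)) hNg]

lemma pos_and_pos_of_det_eq_one_or_eq_neg_one (hNf : 0 < Nf) (hNg : 0 < Ng) (hD : 0 ≤ D)
    (ha : 0 < a) (hb : 0 < b) (hdet : a * β - b * α = 1 ∨ a * β - b * α = -1)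
    (hdot : a * a * Nf + b * b * Ng + 2 * a * b * D ≤
      a * α * Nf + b * β * Ng + (a * β + b * α) * D) :
    0 < α ∧ 0 < β := by
  rcases hdet with hdet | hdet
  · exact pos_and_pos_of_det_eq_one hNf hNg.le hD ha hb hdet hdot
  · exact (pos_and_pos_of_det_eq_one (α := β) (β := α) hNg hNf.le hD hb ha
      (by linarith) (by linarith)).symm

end GramInequality

theorem child_in_cone_general (e f g : V) (hd : det2 f g = 1) (hac : 0 ≤ dot f g)
    (a b : ℤ) (ha : 1 ≤ a) (hb : 1 ≤ b) (he : e = a • f + b • g)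
    (e' : V) (hc : IsParent e e') :
    ∃ a' b' : ℤ, 1 ≤ a' ∧ 1 ≤ b' ∧ e' = a' • f + b' • g := by
  obtain ⟨α, β, rfl⟩ : ∃ α β : ℤ, e' = α • f + β • g := ⟨_, _, eq_det2_smul_add_det2_smul hd e'⟩
  subst he
  have hdet := hc.det2_eq_one_or_eq_neg_one
  have hdot := hc.dot_self_le_dot
  rw [det2_linearCombination, hd, mul_one] at hdet
  rw [dot_linearCombination, dot_linearCombination] at hdot
  have hNf : 0 < dot f f := dot_self_pos_of_det2_ne_zero (g := g) (by rw [hd]; norm_num)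
  have hNg : 0 < dot g g := dot_self_pos_of_det2_ne_zero (g := f) (by rw [det2_swap, hd]; norm_num)
  obtain ⟨hα, hβ⟩ := pos_and_pos_of_det_eq_one_or_eq_neg_one hNf hNg hac ha hb hdet
    (by linarith)
  exact ⟨α, β, hα, hβ, rfl⟩

/-- If `e` lies in the open cone generated by a direct acute basis `(f,g)`, then so does
any child of `e`. -/
theorem child_in_cone (e f g : V) (hne : e ≠ 0) (hd : det2 f g = 1) (hac : 0 ≤ dot f g)
    (a b : ℤ) (ha : 1 ≤ a) (hb : 1 ≤ b) (he : e = a • f + b • g)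
    (e' : V) (hc : IsParent e e') :
    ∃ a' b' : ℤ, 1 ≤ a' ∧ 1 ≤ b' ∧ e' = a' • f + b' • g :=
  child_in_cone_general e f g hd hac a b ha hb he e' hc
end

section
/- The set of irreducible vectors in ℤ² has density 6/π²: the limit as n → ∞ of n⁻² · #{(i,j) ∈ {1,…,n}² : gcd(i,j) = 1} equals 6/π². -/
/-
Möbius inversion over the divisors of `gcd(a, b)` counts the coprime pairs in `[1, n]²` as
`∑_{d ≤ n} μ(d) ⌊n/d⌋²`. After dividing by `n²`, the `d`-th term tends to `μ(d)/d²` and is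
bounded by `1/d²` uniformly in `n`, so by Tannery's theorem the density is
`∑ μ(d)/d² = 1/ζ(2) = 6/π²`.
-/

open Filter Finset ArithmeticFunction Topology
open scoped ArithmeticFunction.Moebius ArithmeticFunction.zeta

theorem sum_divisors_moebius (n : ℕ) : ∑ d ∈ n.divisors, μ d = if n = 1 then 1 else 0 := by
  rw [← coe_mul_zeta_apply, moebius_mul_coe_zeta, one_apply]

theorem card_filter_gcd_eq_one_Icc (m n : ℕ) :
    (#{p ∈ Icc 1 m ×ˢ Icc 1 n | Nat.gcd p.1 p.2 = 1} : ℤ)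
      = ∑ d ∈ Icc 1 n, μ d * (m / d : ℕ) * (n / d : ℕ) := by
  rw [card_filter]
  push_cast
  calc ∑ p ∈ Icc 1 m ×ˢ Icc 1 n, (if Nat.gcd p.1 p.2 = 1 then 1 else 0 : ℤ)
      = ∑ p ∈ Icc 1 m ×ˢ Icc 1 n, ∑ d ∈ (Nat.gcd p.1 p.2).divisors, μ d :=
        sum_congr rfl fun p _ => (sum_divisors_moebius _).symm
    _ = ∑ d ∈ Icc 1 n, ∑ _p ∈ {a ∈ Icc 1 m | d ∣ a} ×ˢ {b ∈ Icc 1 n | d ∣ b}, μ d := by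
        refine sum_comm' fun p d => ?_
        simp only [mem_product, mem_filter, mem_Icc, Nat.mem_divisors, Nat.dvd_gcd_iff]
        constructor
        · rintro ⟨⟨⟨ha1, ham⟩, hb1, hbn⟩, ⟨hda, hdb⟩, -⟩
          exact ⟨⟨⟨⟨ha1, ham⟩, hda⟩, ⟨hb1, hbn⟩, hdb⟩, Nat.pos_of_dvd_of_pos hdb hb1,
            (Nat.le_of_dvd hb1 hdb).trans hbn⟩
        · rintro ⟨⟨⟨⟨ha1, ham⟩, hda⟩, ⟨hb1, hbn⟩, hdb⟩, -⟩
          exact ⟨⟨⟨ha1, ham⟩, hb1, hbn⟩, ⟨hda, hdb⟩, (Nat.gcd_pos_of_pos_left _ ha1).ne'⟩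
    _ = ∑ d ∈ Icc 1 n, μ d * (m / d : ℕ) * (n / d : ℕ) := by
        refine sum_congr rfl fun d _ => ?_
        have hcard (k : ℕ) : #{a ∈ Icc 1 k | d ∣ a} = k / d := Nat.Ioc_filter_dvd_card_eq_div k d
        rw [sum_const, card_product, hcard, hcard, nsmul_eq_mul]
        push_cast
        ring

theorem tendsto_natCast_div_div (d : ℕ) :
    Tendsto (fun n : ℕ => ((n / d : ℕ) : ℝ) / n) atTop (𝓝 (1 / d)) := by
  refine ((tendsto_nat_floor_mul_div_atTop (by positivity)).comp
    tendsto_natCast_atTop_atTop).congr fun n => ?_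
  rw [Function.comp_apply, one_div_mul_eq_div, Nat.floor_div_eq_div]

theorem natCast_div_div_le {K : Type*} [Semifield K] [LinearOrder K] [IsStrictOrderedRing K]
    (n d : ℕ) : ((n / d : ℕ) : K) / n ≤ 1 / d := by
  rcases eq_or_ne n 0 with rfl | hn
  · simp
  · calc ((n / d : ℕ) : K) / n ≤ (n / d : K) / n := by gcongr; exact Nat.cast_div_le
      _ = 1 / d := by field_simp

theorem hasSum_moebius_div_pow {k : ℕ} (hk : 1 < k) :
    HasSum (fun d : ℕ => (μ d : ℂ) / (d : ℂ) ^ k) (riemannZeta k)⁻¹ := by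
  have hk' : 1 < (k : ℂ).re := by simpa using hk
  have hL : LSeries (fun d => (μ d : ℂ)) k = (riemannZeta k)⁻¹ := by
    rw [← LSeries_zeta_eq_riemannZeta hk']
    exact (eq_inv_of_mul_eq_one_right (LSeries_zeta_mul_Lseries_moebius hk'))
  have h := (LSeriesSummable_moebius_iff.mpr hk').LSeriesHasSum
  rw [hL] at h
  refine h.congr_fun fun d => ?_
  rcases eq_or_ne d 0 with rfl | hd
  · simp [LSeries.term]
  · rw [LSeries.term_of_ne_zero hd, Complex.cpow_natCast]

theorem hasSum_moebius_div_sq : HasSum (fun d : ℕ => (μ d : ℝ) / d ^ 2) (6 / Real.pi ^ 2) := by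
  rw [← Complex.hasSum_ofReal]
  convert hasSum_moebius_div_pow one_lt_two using 1
  · ext d; push_cast; rfl
  · push_cast; rw [riemannZeta_two, inv_div]

theorem card_filter_gcd_eq_one_Icc_div_sq (n : ℕ) :
    (#{p ∈ Icc 1 n ×ˢ Icc 1 n | Nat.gcd p.1 p.2 = 1} : ℝ) / (n : ℝ) ^ 2
      = ∑' d : ℕ, (μ d : ℝ) * (((n / d : ℕ) : ℝ) / n) ^ 2 := by
  have hcount := congrArg (Int.cast : ℤ → ℝ) (card_filter_gcd_eq_one_Icc n n)
  simp only [Int.cast_natCast, Int.cast_sum, Int.cast_mul] at hcount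
  rw [hcount, tsum_eq_sum (s := Icc 1 n), sum_div]
  · refine sum_congr rfl fun d _ => ?_
    ring
  · intro d hd
    simp only [mem_Icc, not_and_or, not_le, Nat.lt_one_iff] at hd
    rcases hd with rfl | hd
    · simp
    · simp [Nat.div_eq_of_lt hd]

theorem norm_moebius_mul_natCast_div_div_sq_le (n d : ℕ) :
    ‖(μ d : ℝ) * (((n / d : ℕ) : ℝ) / n) ^ 2‖ ≤ 1 / (d : ℝ) ^ 2 := by
  have hμ : |(μ d : ℝ)| ≤ 1 := by exact_mod_cast abs_moebius_le_one
  calc ‖(μ d : ℝ) * (((n / d : ℕ) : ℝ) / n) ^ 2‖ = |(μ d : ℝ)| * (((n / d : ℕ) : ℝ) / n) ^ 2 := by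
        rw [norm_mul, Real.norm_eq_abs, Real.norm_of_nonneg (sq_nonneg _)]
    _ ≤ 1 * (1 / (d : ℝ)) ^ 2 :=
        mul_le_mul hμ (pow_le_pow_left₀ (by positivity) (natCast_div_div_le n d) 2)
          (by positivity) zero_le_one
    _ = 1 / (d : ℝ) ^ 2 := by ring

open Filter in
/-- The set of irreducible vectors in `ℤ²` has density `6/π²`. -/
theorem density_coprime :
    Tendsto (fun n : ℕ =>
        (((Finset.Icc 1 n ×ˢ Finset.Icc 1 n).filter fun p => Nat.gcd p.1 p.2 = 1).card : ℝ)
          / (n : ℝ) ^ 2)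
      atTop (nhds (6 / Real.pi ^ 2)) := by
  have hlim := tendsto_tsum_of_dominated_convergence
    (Real.summable_one_div_nat_pow.mpr one_lt_two)
    (fun d => ((tendsto_natCast_div_div d).pow 2).const_mul (μ d : ℝ))
    (Eventually.of_forall (norm_moebius_mul_natCast_div_div_sq_le · ·))
  simp_rw [← card_filter_gcd_eq_one_Icc_div_sq] at hlim
  convert hlim using 2
  rw [← hasSum_moebius_div_sq.tsum_eq]
  exact tsum_congr fun d => by ring
end

section
/- Let u : ℤ² → ℝ be defined by u(1,1) = 1, u(−1,0) = u(0,−1) = −1, and u(x) = 2‖x‖² for all other x ∈ ℤ². Then for all x ∈ ℤ² and all irreducible e ∈ ℤ², one has u(x+e) − 2u(x) + u(x−e) ≥ 1; yet u(1,1) + u(0,−1) + u(−1,0) − 3u(0,0) = −1. -/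
/-- A directionally convex function on `ℤ²` which is not convex. -/
noncomputable def u18 : V → ℝ := fun x =>
  if x = (1, 1) then 1
  else if x = (-1, 0) then -1
  else if x = (0, -1) then -1
  else 2 * (nsq x : ℝ)

noncomputable def u18Correction (x : V) : ℝ :=
  if x = (1, 1) ∨ x = (-1, 0) ∨ x = (0, -1) then -3 else 0

lemma u18_eq_two_mul_nsq_add_correction (x : V) :
    u18 x = 2 * (nsq x : ℝ) + u18Correction x := by
  unfold u18 u18Correction
  split_ifs <;> simp_all [nsq] <;> norm_num

lemma u18Correction_nonpos (x : V) : u18Correction x ≤ 0 := by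
  unfold u18Correction
  split_ifs <;> norm_num

lemma neg_three_le_u18Correction_add_sub (x : V) {e : V} (he : e ≠ 0) :
    -3 ≤ u18Correction (x + e) + u18Correction (x - e) := by
  unfold u18Correction
  split_ifs with hplus hminus <;> try norm_num
  obtain ⟨a, b⟩ := x
  obtain ⟨c, d⟩ := e
  simp only [Prod.mk_add_mk, Prod.mk_sub_mk, Prod.mk.injEq] at hplus hminus
  simp only [ne_eq, Prod.mk_eq_zero, not_and_or] at he
  omega

lemma nsq_add_add_nsq_sub (x e : V) : nsq (x + e) + nsq (x - e) = 2 * nsq x + 2 * nsq e := by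
  simp only [nsq, Prod.fst_add, Prod.snd_add, Prod.fst_sub, Prod.snd_sub]
  ring

lemma nsq_pos_of_ne_zero {e : V} (he : e ≠ 0) : 0 < nsq e := by
  obtain ⟨a, b⟩ := e
  simp only [ne_eq, Prod.mk_eq_zero, not_and_or] at he
  unfold nsq
  rcases he with h | h <;> positivity

lemma Irred.ne_zero {e : V} (he : Irred e) : e ≠ 0 := by
  rintro rfl
  simp [Irred] at he

lemma one_le_u18_segment_form (x : V) {e : V} (he : e ≠ 0) :
    1 ≤ u18 (x + e) - 2 * u18 x + u18 (x - e) := by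
  have hpar : (nsq (x + e) : ℝ) + nsq (x - e) = 2 * nsq x + 2 * nsq e := by
    exact_mod_cast nsq_add_add_nsq_sub x e
  have hnsq : (1 : ℝ) ≤ nsq e := by exact_mod_cast nsq_pos_of_ne_zero he
  simp only [u18_eq_two_mul_nsq_add_correction]
  linarith [neg_three_le_u18Correction_add_sub x he, u18Correction_nonpos x]

/-- All segment forms of `u18` are at least `1`, yet the triangle form
`T_0^{(1,1)}` takes the value `-1`. -/
theorem directional_not_convex :
    (∀ x e : V, Irred e → 1 ≤ u18 (x + e) - 2 * u18 x + u18 (x - e)) ∧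
    u18 (1, 1) + u18 (0, -1) + u18 (-1, 0) - 3 * u18 (0, 0) = -1 :=
  ⟨fun x _ he => one_le_u18_segment_form x he.ne_zero, by norm_num [u18, nsq]⟩
end
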